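/- arXiv:2108.09207 — 3 statements merged into one kernel-verified Lean document; each statement's English description precedes it below -/
import Mathlib

section
/- Let r₀₀, r₁₀, r₁₁, r₂₂, r₃₃ ∈ ℝ with r₁₀ > 0, r₁₁ < 0, r₂₂ < 0, r₃₃ < 0 (background-state coefficients, all cross terms other than r₁₀ vanishing). Then there exist positive constants Q₀, Q₁, Q₃ and Q₂ ∈ ℝ, and constants C₁, C₂ > 0, such that for all ξ = (ξ₀,ξ₁,ξ₂,ξ₃) ∈ ℝ⁴: H₀(ξ) := 2r₁₀ξ₁(Q₀ξ₀+Q₁ξ₁+Q₂ξ₂+Q₃ξ₃) − Q₀(r₀₀ξ₀²+r₁₁ξ₁²+r₂₂ξ₂²+r₃₃ξ₃² + 2r₁₀ξ₀ξ₁) ≥ C₁(ξ₁²+ξ₂²+ξ₃²) − C₂ξ₀². -/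
/-- existence of a multiplier making the quadratic form H₀
control the spatial gradient up to the time derivative (Lemma 3.2). -/
theorem stmt12 (r00 r10 r11 r22 r33 : ℝ)
    (h10 : 0 < r10) (h11 : r11 < 0) (h22 : r22 < 0) (h33 : r33 < 0) :
    ∃ Q0 Q1 Q3 Q2 C1 C2 : ℝ,
      0 < Q0 ∧ 0 < Q1 ∧ 0 < Q3 ∧ 0 < C1 ∧ 0 < C2 ∧
      ∀ ξ0 ξ1 ξ2 ξ3 : ℝ,
        2 * r10 * ξ1 * (Q0 * ξ0 + Q1 * ξ1 + Q2 * ξ2 + Q3 * ξ3)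
          - Q0 * (r00 * ξ0 ^ 2 + r11 * ξ1 ^ 2 + r22 * ξ2 ^ 2 + r33 * ξ3 ^ 2
              + 2 * r10 * ξ0 * ξ1)
          ≥ C1 * (ξ1 ^ 2 + ξ2 ^ 2 + ξ3 ^ 2) - C2 * ξ0 ^ 2 := by
  set a : ℝ := 2 * r10 - r11 with ha_def
  set b : ℝ := -r22 with hb_def
  set c : ℝ := -r33 with hc_def
  have ha : 0 < a := by simp only [ha_def]; linarith
  have hb : 0 < b := by simp only [hb_def]; linarith
  have hc : 0 < c := by simp only [hc_def]; linarith
  set k : ℝ := min a c / 2 with hk_def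
  have hk : 0 < k := by positivity
  have hka : k ≤ a / 2 := by
    simp only [hk_def]; have := min_le_left a c; linarith
  have hkc : k ≤ c / 2 := by
    simp only [hk_def]; have := min_le_right a c; linarith
  set C1 : ℝ := min (min a b) c / 2 with hC1_def
  have hC1 : 0 < C1 := by positivity
  have hC1a : C1 ≤ a / 2 := by
    simp only [hC1_def]
    have h1 := min_le_left (min a b) c
    have h2 := min_le_left a b
    linarith
  have hC1b : C1 ≤ b := by
    simp only [hC1_def]
    have h1 := min_le_left (min a b) c
    have h2 := min_le_right a b
    linarith
  have hC1c : C1 ≤ c / 2 := by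
    simp only [hC1_def]
    have h1 := min_le_right (min a b) c
    linarith
  refine ⟨1, 1, k / r10, 0, C1, |r00| + 1, one_pos, one_pos, by positivity, hC1,
    by positivity, ?_⟩
  intro ξ0 ξ1 ξ2 ξ3
  have hr : r10 * (k / r10) = k := by field_simp
  have h00 : -r00 ≥ -(|r00| + 1) := by
    have := le_abs_self r00; linarith
  nlinarith [sq_nonneg (ξ1 + ξ3), sq_nonneg (ξ1 - ξ3), sq_nonneg ξ0, sq_nonneg ξ1,
    sq_nonneg ξ2, sq_nonneg ξ3, mul_nonneg (sq_nonneg ξ1) hk.le,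
    mul_nonneg (sq_nonneg ξ0) (by have := neg_abs_le r00; linarith : (0:ℝ) ≤ |r00| + 1 + r00)]
end

section
/- Let r₁₀ > 0 and r₁₁, r₂₂, r₃₃ < 0. Choose Q₁ᵉ < 0, Q₃ᵉ > 0, Q₂ᵉ ∈ ℝ arbitrary, and Q₀ᵉ > max{(−2r₁₀Q₁ᵉ + r₁₀|Q₂ᵉ| + r₁₀Q₃ᵉ)/(−r₁₁), r₁₀|Q₂ᵉ|/(−r₂₂), r₁₀Q₃ᵉ/(−r₃₃)} (which is positive). Then the quadratic form H₀(ξ) = 2r₁₀ξ₁(Q₀ᵉξ₀+Q₁ᵉξ₁+Q₂ᵉξ₂+Q₃ᵉξ₃) − Q₀ᵉ(r₀₀ξ₀²+r₁₁ξ₁²+r₂₂ξ₂²+r₃₃ξ₃²+2r₁₀ξ₀ξ₁) satisfies H₀(ξ) ≥ (2r₁₀Q₁ᵉ − r₁₁Q₀ᵉ − r₁₀|Q₂ᵉ| − r₁₀Q₃ᵉ)ξ₁² + (−Q₀ᵉr₂₂ − r₁₀|Q₂ᵉ|)ξ₂² + (−Q₀ᵉr₃₃ − r₁₀Q₃ᵉ)ξ₃²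 − Q₀ᵉ r₀₀ ξ₀², where all three spatial coefficients are positive. -/
/-- explicit multiplier construction Q^e for H₀ (Lemma 3.3). -/
theorem stmt14 (r00 r10 r11 r22 r33 : ℝ)
    (h10 : 0 < r10) (h11 : r11 < 0) (h22 : r22 < 0) (h33 : r33 < 0)
    (Q0e Q1e Q2e Q3e : ℝ) (hQ1 : Q1e < 0) (hQ3 : 0 < Q3e)
    (hQ0 : Q0e > max (max ((-2 * r10 * Q1e + r10 * |Q2e| + r10 * Q3e) / (-r11))
        (r10 * |Q2e| / (-r22))) (r10 * Q3e / (-r33))) :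
    0 < Q0e ∧
    0 < 2 * r10 * Q1e - r11 * Q0e - r10 * |Q2e| - r10 * Q3e ∧
    0 < -Q0e * r22 - r10 * |Q2e| ∧
    0 < -Q0e * r33 - r10 * Q3e ∧
    ∀ ξ0 ξ1 ξ2 ξ3 : ℝ,
      2 * r10 * ξ1 * (Q0e * ξ0 + Q1e * ξ1 + Q2e * ξ2 + Q3e * ξ3)
          - Q0e * (r00 * ξ0 ^ 2 + r11 * ξ1 ^ 2 + r22 * ξ2 ^ 2 + r33 * ξ3 ^ 2
              + 2 * r10 * ξ0 * ξ1)
        ≥ (2 * r10 * Q1e - r11 * Q0e - r10 * |Q2e| - r10 * Q3e) * ξ1 ^ 2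
          + (-Q0e * r22 - r10 * |Q2e|) * ξ2 ^ 2
          + (-Q0e * r33 - r10 * Q3e) * ξ3 ^ 2
          - Q0e * r00 * ξ0 ^ 2 := by
  have habs : 0 ≤ |Q2e| := abs_nonneg _
  have h1 : (-2 * r10 * Q1e + r10 * |Q2e| + r10 * Q3e) / (-r11) < Q0e :=
    lt_of_le_of_lt (le_max_left _ _ |>.trans (le_max_left _ _)) hQ0
  have h2 : r10 * |Q2e| / (-r22) < Q0e :=
    lt_of_le_of_lt (le_max_right _ _ |>.trans (le_max_left _ _)) hQ0
  have h3 : r10 * Q3e / (-r33) < Q0e :=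
    lt_of_le_of_lt (le_max_right _ _) hQ0
  have h1' := (div_lt_iff₀ (by linarith : (0:ℝ) < -r11)).mp h1
  have h2' := (div_lt_iff₀ (by linarith : (0:ℝ) < -r22)).mp h2
  have h3' := (div_lt_iff₀ (by linarith : (0:ℝ) < -r33)).mp h3
  have hQ0pos : 0 < Q0e := by
    have : (0:ℝ) < r10 * Q3e / (-r33) := div_pos (mul_pos h10 hQ3) (by linarith)
    linarith
  refine ⟨hQ0pos, by nlinarith, by nlinarith, by nlinarith, ?_⟩
  intro ξ0 ξ1 ξ2 ξ3
  have hb2 : 2 * r10 * Q2e * ξ1 * ξ2 ≥ -(r10 * |Q2e| * (ξ1 ^ 2 + ξ2 ^ 2)) := by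
    have := abs_le.mp (le_refl |Q2e|)
    rcases le_or_gt 0 Q2e with h | h
    · rw [abs_of_nonneg h]
      nlinarith [mul_nonneg (mul_nonneg h10.le h) (sq_nonneg (ξ1 + ξ2))]
    · rw [abs_of_neg h]
      nlinarith [mul_nonneg (mul_nonneg h10.le (by linarith : (0:ℝ) ≤ -Q2e)) (sq_nonneg (ξ1 - ξ2))]
  have hb3 : 2 * r10 * Q3e * ξ1 * ξ3 ≥ -(r10 * Q3e * (ξ1 ^ 2 + ξ3 ^ 2)) := by
    nlinarith [mul_nonneg (mul_nonneg h10.le hQ3.le) (sq_nonneg (ξ1 + ξ3))]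
  nlinarith [hb2, hb3]
end

section
/- Let (ρ₋, q₋) and (ρ₊, q₊) be positive with q₋ > c₋ := ρ₋^{(γ−1)/2} and q₊ < c₊ := ρ₊^{(γ−1)/2}, γ > 1. If ρ₋q₋ = ρ₊q₊ and q₋²/2 + ı(ρ₋) = q₊²/2 + ı(ρ₊) with ı(ρ) = (ρ^{γ−1}−1)/(γ−1), then ρ₋ < ρ₊ and q₋ > q₊. -/
/-- entropy ordering across a transonic normal shock: density
increases and velocity decreases. -/
theorem stmt18 (γ ρm ρp qm qp : ℝ) (hγ : 1 < γ)
    (hρm : 0 < ρm) (hρp : 0 < ρp) (hqm : 0 < qm) (hqp : 0 < qp)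
    (hsup : qm > ρm ^ ((γ - 1) / 2))
    (hsub : qp < ρp ^ ((γ - 1) / 2))
    (hmass : ρm * qm = ρp * qp)
    (hbern : qm ^ 2 / 2 + (ρm ^ (γ - 1) - 1) / (γ - 1) =
        qp ^ 2 / 2 + (ρp ^ (γ - 1) - 1) / (γ - 1)) :
    ρm < ρp ∧ qp < qm := by
  have hρ : ρm < ρp := by
    by_contra h
    push_neg at h
    have h1 : ρp ^ ((γ - 1) / 2) ≤ ρm ^ ((γ - 1) / 2) :=
      Real.rpow_le_rpow hρp.le h (by linarith)
    have h2 : qp < qm := lt_trans (lt_of_lt_of_le hsub h1) hsup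
    nlinarith
  refine ⟨hρ, ?_⟩
  nlinarith
end
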